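/- arXiv:2409.11152 — 4 statements merged into one kernel-verified Lean document; each statement's English description precedes it below -/
import Mathlib

section
/- There exist constants c > 0 and n_0 such that for every n ≥ n_0 and every p with 1 − (1/10)/n ≤ p ≤ 1, if G ~ G(n, p) then the probability that G is even-decomposable is at most e^{-c n}. -/
/-!
Backwards along a chain `univ = V_0 ⊃ ⋯ ⊃ V_k = ∅` witnessing even-decomposability, the
complement keeps at least `|V_i| / 2` edges inside `V_i`. Removing an independent set of size
`d ≥ 2` removes a clique of `C(d, 2) ≥ d - 1` non-edges; when a single vertex is removed from
`V_i`, leaving `t` vertices, `C(t + 1, 2) = C(t, 2) + t` and the evenness of both edge counts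
force a non-edge at that vertex whenever `t` is odd. Hence an even-decomposable graph misses at
least `⌊n / 2⌋` edges, and weighting each non-edge by `e` (an exponential Markov bound) gives
`P ≤ e^{-⌊n/2⌋} (1 + (e - 1)(1 - p))^{C(n, 2)} ≤ e^{n/10 - ⌊n/2⌋}`.
-/

/-- Number of edges of the induced subgraph of `G` on the vertex set `S`. -/
noncomputable def edgesIn {V : Type*} (G : SimpleGraph V) (S : Set V) : ℕ :=
  {e ∈ G.edgeSet | ∀ v ∈ e, v ∈ S}.ncard

/-- A graph is even-decomposable if there is a sequence `univ = V_0 ⊃ V_1 ⊃ ⋯ ⊃ V_k = ∅`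
such that each induced subgraph `G[V_i]` has an even number of edges and each difference
`V_i \ V_{i+1}` is an independent set. -/
def EvenDecomposable {V : Type*} (G : SimpleGraph V) : Prop :=
  ∃ (k : ℕ) (Vs : ℕ → Set V),
    Vs 0 = Set.univ ∧ Vs k = ∅ ∧
    (∀ i < k, Vs (i + 1) ⊂ Vs i) ∧
    (∀ i < k, Even (edgesIn G (Vs i))) ∧
    (∀ i < k, ∀ u ∈ Vs i \ Vs (i + 1), ∀ v ∈ Vs i \ Vs (i + 1), ¬ G.Adj u v)

open scoped Classical in
/-- The probability that `G(n, p)` (the binomial random graph on vertex set `Fin n` with edge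
probability `p`) satisfies the predicate `P`. -/
noncomputable def prob (n : ℕ) (p : ℝ) (P : SimpleGraph (Fin n) → Prop) : ℝ :=
  ∑ G : SimpleGraph (Fin n),
    if P G then p ^ G.edgeSet.ncard * (1 - p) ^ (n.choose 2 - G.edgeSet.ncard) else 0

open SimpleGraph

section EdgesIn

variable {V : Type*}

lemma edgesIn_univ (G : SimpleGraph V) : edgesIn G Set.univ = G.edgeSet.ncard := by
  simp [edgesIn]

lemma edgesIn_eq_zero_of_isIndepSet {G : SimpleGraph V} {S : Set V} (hS : G.IsIndepSet S) :
    edgesIn G S = 0 := by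
  have hempty : {e ∈ G.edgeSet | ∀ v ∈ e, v ∈ S} = ∅ := by
    ext e
    induction e with
    | _ u v => simpa using fun h hu hv => hS hu hv (G.ne_of_adj h) h
  rw [edgesIn, hempty, Set.ncard_empty]

lemma edgesIn_top [Finite V] (S : Set V) : edgesIn ⊤ S = S.ncard.choose 2 := by
  classical
  have := Fintype.ofFinite V
  have hset : {e ∈ (⊤ : SimpleGraph V).edgeSet | ∀ v ∈ e, v ∈ S}
      = ↑({e ∈ S.toFinset.sym2 | ¬ e.IsDiag}) := by
    ext e
    simp [Finset.mem_sym2_iff, and_comm]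
  rw [edgesIn, hset, Set.ncard_coe_finset, Finset.sym2_eq_image, Sym2.filter_image_mk_not_isDiag,
    Sym2.card_image_offDiag, Set.ncard_eq_toFinset_card']

lemma edgesIn_sup [Finite V] {G H : SimpleGraph V} (hGH : Disjoint G H) (S : Set V) :
    edgesIn (G ⊔ H) S = edgesIn G S + edgesIn H S := by
  rw [edgesIn, edgesIn, edgesIn,
    ← Set.ncard_union_eq ((disjoint_edgeSet.2 hGH).mono (Set.sep_subset _ _) (Set.sep_subset _ _))]
  congr 1
  ext e
  simp [or_and_right]

lemma edgesIn_add_edgesIn_compl [Finite V] (G : SimpleGraph V) (S : Set V) :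
    edgesIn G S + edgesIn Gᶜ S = S.ncard.choose 2 := by
  rw [← edgesIn_sup disjoint_compl_right, sup_compl_eq_top, edgesIn_top]

lemma SimpleGraph.ncard_edgeSet_add_ncard_edgeSet_compl [Finite V] (G : SimpleGraph V) :
    G.edgeSet.ncard + Gᶜ.edgeSet.ncard = (Nat.card V).choose 2 := by
  rw [← edgesIn_univ, ← edgesIn_univ, edgesIn_add_edgesIn_compl, Set.ncard_univ]

lemma edgesIn_add_edgesIn_le_edgesIn_union [Finite V] (G : SimpleGraph V) {S T : Set V}
    (hST : Disjoint S T) : edgesIn G S + edgesIn G T ≤ edgesIn G (S ∪ T) := by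
  rw [edgesIn, edgesIn, ← Set.ncard_union_eq]
  · exact Set.ncard_le_ncard fun e he => he.elim
      (fun he => ⟨he.1, fun v hv => Or.inl (he.2 v hv)⟩)
      (fun he => ⟨he.1, fun v hv => Or.inr (he.2 v hv)⟩)
  · refine Set.disjoint_left.2 fun e heS heT => ?_
    induction e with
    | _ u v =>
      exact hST.notMem_of_mem_left (heS.2 u (Sym2.mem_mk_left u v)) (heT.2 u (Sym2.mem_mk_left u v))

lemma Nat.succ_choose_two (m : ℕ) : (m + 1).choose 2 = m + m.choose 2 := by
  simpa using Nat.choose_succ_succ' m 1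

lemma card_div_two_le_edgesIn_compl_of_even [Finite V] {G : SimpleGraph V} {S T : Set V}
    (hTS : T ⊂ S) (hind : G.IsIndepSet (S \ T))
    (hS : Even (edgesIn G S)) (hT : Even (edgesIn G T))
    (ihT : T.ncard / 2 ≤ edgesIn Gᶜ T) : S.ncard / 2 ≤ edgesIn Gᶜ S := by
  have hdiff : edgesIn Gᶜ (S \ T) = (S \ T).ncard.choose 2 := by
    rw [← edgesIn_add_edgesIn_compl G, edgesIn_eq_zero_of_isIndepSet hind, zero_add]
  have hsplit : edgesIn Gᶜ T + edgesIn Gᶜ (S \ T) ≤ edgesIn Gᶜ S := by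
    simpa [Set.union_sdiff_cancel hTS.subset] using
      edgesIn_add_edgesIn_le_edgesIn_union Gᶜ (Set.disjoint_sdiff_right (s := T) (t := S))
  obtain ⟨m, hm⟩ : ∃ m, (S \ T).ncard = m + 1 :=
    Nat.exists_eq_add_one.2 ((Set.ncard_pos (Set.toFinite _)).2 (Set.nonempty_of_ssubset hTS))
  have hcard : S.ncard = T.ncard + (m + 1) := by
    rw [← hm, add_comm, Set.ncard_sdiff_add_ncard_of_subset hTS.subset]
  have hSc := edgesIn_add_edgesIn_compl G S
  have hTc := edgesIn_add_edgesIn_compl G T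
  rw [hm, Nat.succ_choose_two] at hdiff
  rw [Nat.even_iff] at hS hT
  rcases m.eq_zero_or_pos with rfl | hm_pos
  · rw [hcard, Nat.succ_choose_two] at hSc
    omega
  · omega

end EdgesIn

theorem EvenDecomposable.card_div_two_le_ncard_compl_edgeSet {V : Type*} [Finite V]
    {G : SimpleGraph V} (hG : EvenDecomposable G) : Nat.card V / 2 ≤ Gᶜ.edgeSet.ncard := by
  obtain ⟨k, Vs, h0, hk, hss, heven, hind⟩ := hG
  have heven_le : ∀ i ≤ k, Even (edgesIn G (Vs i)) := by
    intro i hi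
    obtain hi | rfl := hi.lt_or_eq
    · exact heven i hi
    · rw [hk, edgesIn_eq_zero_of_isIndepSet (Set.pairwise_empty _)]
      exact Even.zero
  have hV0 : (Vs 0).ncard / 2 ≤ edgesIn Gᶜ (Vs 0) := by
    refine Nat.decreasingInduction (motive := fun i _ => (Vs i).ncard / 2 ≤ edgesIn Gᶜ (Vs i))
      (fun i hi ih => ?_) (by simp [hk]) (Nat.zero_le k)
    exact card_div_two_le_edgesIn_compl_of_even (hss i hi) (fun u hu v hv _ => hind i hi u hu v hv)
      (heven_le i hi.le) (heven_le (i + 1) hi) ih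
  rwa [h0, Set.ncard_univ, edgesIn_univ] at hV0

lemma SimpleGraph.sum_pow_ncard_edgeSet_mul_pow {V R : Type*} [Fintype V] [DecidableEq V]
    [CommSemiring R] (x y : R) :
    ∑ G : SimpleGraph V, x ^ G.edgeSet.ncard * y ^ ((Fintype.card V).choose 2 - G.edgeSet.ncard)
      = (x + y) ^ (Fintype.card V).choose 2 := by
  classical
  rw [← card_edgeFinset_top_eq_card_choose_two, ← Finset.sum_pow_mul_eq_add_pow]
  refine Finset.sum_nbij' (fun G => G.edgeFinset) (fun s => fromEdgeSet s) (fun G _ => ?_)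
    (fun _ _ => Finset.mem_univ _) (fun G _ => ?_) (fun s hs => ?_) (fun G _ => ?_)
  · exact Finset.mem_powerset.2 (edgeFinset_mono le_top)
  · simp
  · rw [Finset.mem_powerset, ← Finset.coe_subset, coe_edgeFinset, edgeSet_top] at hs
    rw [← Finset.coe_inj, coe_edgeFinset, edgeSet_fromEdgeSet, sdiff_eq_left]
    simpa using Set.disjoint_compl_right_iff_subset.2 hs
  · simp [← coe_edgeFinset]

lemma prob_mul_pow_le {n t : ℕ} {p r : ℝ} {P : SimpleGraph (Fin n) → Prop} (hp0 : 0 ≤ p)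
    (hp1 : p ≤ 1) (hr : 1 ≤ r) (hP : ∀ G, P G → t ≤ Gᶜ.edgeSet.ncard) :
    prob n p P * r ^ t ≤ (p + r * (1 - p)) ^ n.choose 2 := by
  classical
  have hsum := SimpleGraph.sum_pow_ncard_edgeSet_mul_pow (V := Fin n) p (r * (1 - p))
  rw [Fintype.card_fin] at hsum
  rw [← hsum, prob, Finset.sum_mul]
  refine Finset.sum_le_sum fun G _ => ?_
  split_ifs with hG
  · have hcompl := G.ncard_edgeSet_add_ncard_edgeSet_compl
    rw [Nat.card_fin] at hcompl
    have ht : t ≤ n.choose 2 - G.edgeSet.ncard := by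
      have := hP G hG
      omega
    calc p ^ G.edgeSet.ncard * (1 - p) ^ (n.choose 2 - G.edgeSet.ncard) * r ^ t
        ≤ p ^ G.edgeSet.ncard * (1 - p) ^ (n.choose 2 - G.edgeSet.ncard)
          * r ^ (n.choose 2 - G.edgeSet.ncard) := by
          gcongr
      _ = _ := by rw [mul_pow]; ring
  · rw [zero_mul]
    have : 0 ≤ 1 - p := by linarith
    positivity

lemma add_mul_one_sub_pow_le_exp {p r : ℝ} (hp0 : 0 ≤ p) (hp1 : p ≤ 1) (hr : 0 ≤ r) (N : ℕ) :
    (p + r * (1 - p)) ^ N ≤ Real.exp ((r - 1) * (1 - p) * N) := by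
  have hbase : p + r * (1 - p) ≤ Real.exp ((r - 1) * (1 - p)) := by
    linarith [Real.add_one_le_exp ((r - 1) * (1 - p))]
  have hnonneg : 0 ≤ 1 - p := by linarith
  calc (p + r * (1 - p)) ^ N ≤ Real.exp ((r - 1) * (1 - p)) ^ N :=
        pow_le_pow_left₀ (by positivity) hbase N
    _ = Real.exp ((r - 1) * (1 - p) * N) := by rw [← Real.exp_nat_mul, mul_comm]

/-- For `1 - (1/10)/n ≤ p ≤ 1` and `G ~ G(n, p)`, the probability that `G` is
even-decomposable is at most `e^{-c n}`. -/
theorem even_decomposable_prob_very_dense :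
    ∃ c : ℝ, 0 < c ∧ ∃ n₀ : ℕ, ∀ n : ℕ, n₀ ≤ n → ∀ p : ℝ,
      1 - (1 / 10) / (n : ℝ) ≤ p → p ≤ 1 →
      prob n p (fun G => EvenDecomposable G) ≤ Real.exp (-(c * (n : ℝ))) := by
  refine ⟨1 / 4, by norm_num, 4, fun n hn p hp hp1 => ?_⟩
  have hn4 : (4 : ℝ) ≤ n := by exact_mod_cast hn
  have hqn : (1 - p) * n ≤ 1 / 10 := by
    rwa [sub_le_comm, le_div_iff₀ (by positivity)] at hp
  have hp0 : 0 ≤ p := by nlinarith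
  have hN : (n.choose 2 : ℝ) ≤ n ^ 2 / 2 := by
    simpa using Nat.choose_le_pow_div (α := ℝ) 2 n
  have hexp : (Real.exp 1 - 1) * (1 - p) * n.choose 2 ≤ n / 10 := by
    have he : Real.exp 1 - 1 ≤ 2 := by linarith [Real.exp_one_lt_d9]
    calc (Real.exp 1 - 1) * (1 - p) * n.choose 2 ≤ 2 * (1 - p) * (n ^ 2 / 2) := by
          gcongr
      _ = (1 - p) * n * n := by ring
      _ ≤ n / 10 := by nlinarith
  have htail := prob_mul_pow_le (P := fun G => EvenDecomposable G) (t := n / 2) hp0 hp1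
    (Real.one_le_exp zero_le_one) fun G hG => by simpa using hG.card_div_two_le_ncard_compl_edgeSet
  have ht : (n : ℝ) ≤ 2 * (n / 2 : ℕ) + 1 := by exact_mod_cast (by omega : n ≤ 2 * (n / 2) + 1)
  have hprob := (htail.trans (add_mul_one_sub_pow_le_exp hp0 hp1 (Real.exp_pos 1).le _)).trans
    (Real.exp_le_exp.2 hexp)
  rw [Real.exp_one_pow, ← le_div_iff₀ (Real.exp_pos _), ← Real.exp_sub] at hprob
  exact hprob.trans (Real.exp_le_exp.2 (by linarith))
end

section
/- For every n ≥ 4, if G ~ G(n, 1/2) then the probability that G is not even-degenerate is at least (1/2)^{2n−3}. Equivalently, for n ≥ 4 the number of graphs on vertex set {1,…,n} that are not even-degenerate is at least 2^{n(n-1)/2 − (2n−3)}. -/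
/-- A graph on `Fin n` is even-degenerate if there is an ordering `v_1, …, v_n` of its vertices
(given by a permutation) such that for each `1 ≤ i ≤ n - 2`, the vertex `v_i` has an even number
of neighbours among `{v_{i+1}, …, v_n}`. (Indices below are 0-based.) -/
def EvenDegenerate {n : ℕ} (G : SimpleGraph (Fin n)) : Prop :=
  ∃ e : Equiv.Perm (Fin n), ∀ i : Fin n, (i : ℕ) + 3 ≤ n →
    Even ({j : Fin n | i < j ∧ G.Adj (e i) (e j)}.ncard)

/-! Given a graph `H` on `n - 2` vertices, add an apex `a` joined to the even-degree vertices of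
`H`, then an apex `b` joined to `a` iff `a` now has even degree. In the result every vertex except
`b` has odd degree and `b` has degree at most one. In an even-degenerate ordering the first vertex
has all its neighbours after it, so its degree is even: it must be `b`, and `b` is isolated. Then
the second vertex also has all its neighbours after it, but odd degree. Hence `H` injects into the
non-even-degenerate graphs on `n` vertices, and `(n choose 2) - (n - 2 choose 2) = 2n - 3`. -/

open Finset

open scoped Classical

namespace SimpleGraph

variable {V : Type*} [Fintype V]

theorem card_simpleGraph [DecidableEq V] :
    Fintype.card (SimpleGraph V) = 2 ^ (Fintype.card V).choose 2 := by
  let edges : SimpleGraph V ≃ Set {e : Sym2 V // ¬e.IsDiag} :=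
    { toFun G := Subtype.val ⁻¹' G.edgeSet
      invFun s := fromEdgeSet (Subtype.val '' s)
      left_inv G := by ext v w; simpa using G.ne_of_adj
      right_inv s := by ext ⟨e, he⟩; simp [he] }
  rw [Fintype.card_congr edges, Fintype.card_set, Sym2.card_subtype_not_diag]

theorem ncard_edgeSet_le_choose_two (G : SimpleGraph V) :
    G.edgeSet.ncard ≤ (Fintype.card V).choose 2 := by
  rw [Set.ncard_eq_toFinset_card']
  exact G.card_edgeFinset_le_card_choose_two

theorem degree_eq_sum_option (H : SimpleGraph (Option V)) (x : Option V) :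
    H.degree x = (if H.Adj x none then 1 else 0) + ∑ v, if H.Adj x (some v) then 1 else 0 := by
  rw [← Nat.cast_id (H.degree x), degree_eq_sum_if_adj, Fintype.sum_option]

variable (G : SimpleGraph V)

def evenDegreeCone : SimpleGraph (Option V) where
  Adj
    | some v, some w => G.Adj v w
    | some v, none | none, some v => Even (G.degree v)
    | none, none => False
  symm := ⟨by rintro (_ | v) (_ | w) h <;> simp_all [G.adj_comm]⟩
  loopless := ⟨by rintro (_ | v) h <;> simp_all⟩

@[simp] theorem evenDegreeCone_adj_some_some (v w : V) :
    G.evenDegreeCone.Adj (some v) (some w) ↔ G.Adj v w := Iff.rfl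

@[simp] theorem evenDegreeCone_adj_some_none (v : V) :
    G.evenDegreeCone.Adj (some v) none ↔ Even (G.degree v) := Iff.rfl

@[simp] theorem evenDegreeCone_adj_none_some (v : V) :
    G.evenDegreeCone.Adj none (some v) ↔ Even (G.degree v) := Iff.rfl

theorem odd_degree_evenDegreeCone_some (v : V) : Odd (G.evenDegreeCone.degree (some v)) := by
  rw [degree_eq_sum_option]
  simp only [evenDegreeCone_adj_some_none, evenDegreeCone_adj_some_some]
  rw [← Nat.cast_id (∑ w, _), ← degree_eq_sum_if_adj]
  split_ifs with h
  · exact h.one_add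
  · simpa using Nat.not_even_iff_odd.mp h

theorem degree_evenDegreeCone_none : G.evenDegreeCone.degree none = #{v | Even (G.degree v)} := by
  rw [degree_eq_sum_option, if_neg G.evenDegreeCone.irrefl, zero_add, card_filter]
  simp only [evenDegreeCone_adj_none_some]

theorem comap_some_evenDegreeCone : G.evenDegreeCone.comap some = G := rfl

theorem evenDegreeCone_injective : Function.Injective (evenDegreeCone (V := V)) :=
  Function.LeftInverse.injective comap_some_evenDegreeCone

theorem degree_evenDegreeCone_evenDegreeCone_none_le_one :
    G.evenDegreeCone.evenDegreeCone.degree none ≤ 1 := by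
  rw [degree_evenDegreeCone_none, card_le_one]
  rintro (_ | v) hv (_ | w) hw
  · rfl
  all_goals simp_all [← Nat.not_odd_iff_even, odd_degree_evenDegreeCone_some]

end SimpleGraph

theorem ncard_adj_after_eq_degree {n : ℕ} {G : SimpleGraph (Fin n)} [DecidableRel G.Adj]
    (e : Equiv.Perm (Fin n)) {i : Fin n} (h : ∀ j, G.Adj (e i) (e j) → i < j) :
    {j | i < j ∧ G.Adj (e i) (e j)}.ncard = G.degree (e i) := by
  have : {j | i < j ∧ G.Adj (e i) (e j)} = e ⁻¹' G.neighborSet (e i) := by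
    ext j
    exact ⟨And.right, fun hj => ⟨h j hj, hj⟩⟩
  rw [this, Set.ncard_preimage_of_injective_subset_range e.injective (by simp),
    Set.ncard_eq_toFinset_card', Set.toFinset_card, SimpleGraph.card_neighborSet_eq_degree]

theorem not_evenDegenerate_of_odd_degree_of_ne {n : ℕ} (hn : 4 ≤ n) {G : SimpleGraph (Fin n)}
    [DecidableRel G.Adj] (b : Fin n) (hodd : ∀ v, v ≠ b → Odd (G.degree v))
    (hb : G.degree b ≤ 1) :
    ¬EvenDegenerate G := by
  rintro ⟨e, he⟩
  obtain ⟨i₀, hi₀⟩ : ∃ i : Fin n, (i : ℕ) = 0 := ⟨⟨0, by omega⟩, rfl⟩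
  obtain ⟨i₁, hi₁⟩ : ∃ i : Fin n, (i : ℕ) = 1 := ⟨⟨1, by omega⟩, rfl⟩
  have even_of_forward (i : Fin n) (hi : (i : ℕ) + 3 ≤ n)
      (h : ∀ j, G.Adj (e i) (e j) → i < j) : Even (G.degree (e i)) :=
    ncard_adj_after_eq_degree e h ▸ he i hi
  have first_even : Even (G.degree (e i₀)) := by
    refine even_of_forward i₀ (by omega) fun j hj => ?_
    have : j ≠ i₀ := fun hj₀ => G.ne_of_adj hj (by rw [hj₀])
    rw [Fin.lt_def]
    omega
  have first_eq_b : e i₀ = b := by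
    by_contra hne
    exact Nat.not_even_iff_odd.mpr (hodd _ hne) first_even
  have b_isolated : G.degree b = 0 := by
    rw [← first_eq_b] at hb ⊢
    rcases first_even with ⟨k, hk⟩
    omega
  have second_even : Even (G.degree (e i₁)) := by
    refine even_of_forward i₁ (by omega) fun j hj => ?_
    have hj₁ : j ≠ i₁ := fun hj₁ => G.ne_of_adj hj (by rw [hj₁])
    have hj₀ : j ≠ i₀ := by
      rintro rfl
      rw [first_eq_b] at hj
      have := (G.degree_pos_iff_exists_adj b).mpr ⟨_, hj.symm⟩
      omega
    rw [Fin.lt_def]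
    omega
  have second_ne_b : e i₁ ≠ b := first_eq_b ▸ e.injective.ne (by omega)
  exact Nat.not_even_iff_odd.mpr (hodd _ second_ne_b) second_even

theorem card_simpleGraph_le_card_not_evenDegenerate (m : ℕ) (hm : 2 ≤ m) :
    2 ^ m.choose 2 ≤ #{G : SimpleGraph (Fin (m + 2)) | ¬EvenDegenerate G} := by
  let e : Option (Option (Fin m)) ≃ Fin (m + 2) := Fintype.equivFinOfCardEq (by simp)
  let extend (G : SimpleGraph (Fin m)) : SimpleGraph (Fin (m + 2)) :=
    G.evenDegreeCone.evenDegreeCone.map e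
  have extend_injective : Function.Injective extend :=
    (SimpleGraph.map_injective e.toEmbedding).comp
      (SimpleGraph.evenDegreeCone_injective.comp SimpleGraph.evenDegreeCone_injective)
  have extend_not_evenDegenerate (G : SimpleGraph (Fin m)) : ¬EvenDegenerate (extend G) := by
    have degree_extend (x) : (extend G).degree (e x) = G.evenDegreeCone.evenDegreeCone.degree x :=
      (SimpleGraph.Iso.map e _).degree_eq x
    refine not_evenDegenerate_of_odd_degree_of_ne (by omega) (e none) (fun v hv => ?_) ?_
    · obtain ⟨_ | x, rfl⟩ := e.surjective v
      · exact absurd rfl hv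
      · rw [degree_extend]
        exact SimpleGraph.odd_degree_evenDegreeCone_some _ x
    · rw [degree_extend]
      exact SimpleGraph.degree_evenDegreeCone_evenDegreeCone_none_le_one G
  calc 2 ^ m.choose 2 = #(univ : Finset (SimpleGraph (Fin m))) := by
        rw [card_univ, SimpleGraph.card_simpleGraph, Fintype.card_fin]
    _ ≤ _ := card_le_card_of_injOn extend (fun G _ => by simpa using extend_not_evenDegenerate G)
        extend_injective.injOn

theorem prob_half (n : ℕ) (P : SimpleGraph (Fin n) → Prop) [DecidablePred P] :
    prob n (1 / 2) P = #{G | P G} * (1 / 2 : ℝ) ^ n.choose 2 := by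
  calc prob n (1 / 2) P
        = ∑ G : SimpleGraph (Fin n), if P G then (1 / 2 : ℝ) ^ n.choose 2 else 0 := by
        refine sum_congr rfl fun G _ => ?_
        have := Fintype.card_fin n ▸ G.ncard_edgeSet_le_choose_two
        split_ifs
        · rw [show (1 - 1 / 2 : ℝ) = 1 / 2 by norm_num, ← pow_add, Nat.add_sub_cancel' this]
        · rfl
    _ = _ := by rw [sum_ite, sum_const_zero, add_zero, sum_const, nsmul_eq_mul]

theorem Nat.choose_two_add_two (m : ℕ) : (m + 2).choose 2 = m.choose 2 + (2 * m + 1) := by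
  simp only [Nat.choose_succ_succ, Nat.choose_one_right, Nat.choose_zero_right]
  ring

/-- For every `n ≥ 4` and `G ~ G(n, 1/2)`, the probability that `G` is not even-degenerate is
at least `(1/2)^{2n - 3}`. -/
theorem not_even_degenerate_lower_bound :
    ∀ n : ℕ, 4 ≤ n →
      (1 / 2 : ℝ) ^ (2 * n - 3) ≤ prob n (1 / 2) (fun G => ¬ EvenDegenerate G) := by
  intro n hn
  obtain ⟨m, rfl⟩ : ∃ m, n = m + 2 := ⟨n - 2, by omega⟩
  have count := card_simpleGraph_le_card_not_evenDegenerate m (by omega)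
  rw [prob_half]
  calc (1 / 2 : ℝ) ^ (2 * (m + 2) - 3) = 2 ^ m.choose 2 * (1 / 2) ^ (m + 2).choose 2 := by
        rw [Nat.choose_two_add_two, show 2 * (m + 2) - 3 = 2 * m + 1 by omega,
          pow_add (1 / 2 : ℝ) (m.choose 2), ← mul_assoc, ← mul_pow]
        norm_num
    _ ≤ _ := by gcongr; exact_mod_cast count
end

section
/- For any finite graph G and any set S of vertices of G, there is a subset Q ⊆ S whose removal from G is admissible, such that the vertices of S \ Q form a clique in the remaining graph G − Q and every vertex of S \ Q has odd degree in G − Q. -/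
/-- The removal of `S` from the graph `G` restricted to the remaining vertex set `W` is simple
admissible: `S ⊆ W`, `S` is independent, and the number of edges between `S` and `W \ S`
is even. -/
def SimpleAdmissibleIn {V : Type*} (G : SimpleGraph V) (W S : Set V) : Prop :=
  S ⊆ W ∧ (∀ u ∈ S, ∀ v ∈ S, ¬ G.Adj u v) ∧
    Even ({p : V × V | G.Adj p.1 p.2 ∧ p.1 ∈ S ∧ p.2 ∈ W \ S}.ncard)

/-- The removal of `S` from the graph `G` restricted to the remaining vertex set `W` is
admissible: it is realized by a sequence of simple admissible removals. -/
def AdmissibleIn {V : Type*} (G : SimpleGraph V) (W S : Set V) : Prop :=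
  ∃ (k : ℕ) (Ss : ℕ → Set V),
    (∀ i < k, SimpleAdmissibleIn G (W \ ⋃ j ∈ Finset.range i, Ss j) (Ss i)) ∧
    (⋃ i ∈ Finset.range k, Ss i) = S

/-- The removal of `S` from the graph `G` is admissible. -/
def Admissible {V : Type*} (G : SimpleGraph V) (S : Set V) : Prop :=
  AdmissibleIn G Set.univ S

/-- The degree of `v` in the graph `G` restricted to the remaining vertex set `W`. -/
noncomputable def degIn {V : Type*} (G : SimpleGraph V) (W : Set V) (v : V) : ℕ :=
  (G.neighborSet v ∩ W).ncard

/-! A vertex of even degree is on its own a simple admissible removal, and so is a pair of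
nonadjacent vertices of odd degree, since the edges leaving an independent set are counted by
the degrees of its vertices. Removing such vertices of `S` while possible shrinks `S`; when
neither kind exists, what is left of `S` is a clique of vertices of odd degree. -/

section

variable {V : Type*} (G : SimpleGraph V)

theorem AdmissibleIn.empty (W : Set V) : AdmissibleIn G W ∅ :=
  ⟨0, fun _ => ∅, by simp, by simp⟩

theorem biUnion_range_succ_casesOn (T : Set V) (Ss : ℕ → Set V) (m : ℕ) :
    ⋃ j ∈ Finset.range (m + 1), (Nat.casesOn j T Ss : Set V) =
      T ∪ ⋃ j ∈ Finset.range m, Ss j := by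
  rw [Finset.range_add_one', Finset.set_biUnion_insert, Finset.map_eq_image,
    Finset.set_biUnion_finset_image]
  rfl

theorem AdmissibleIn.union_of_simpleAdmissibleIn {W T Q : Set V}
    (hT : SimpleAdmissibleIn G W T) (hQ : AdmissibleIn G (W \ T) Q) :
    AdmissibleIn G W (T ∪ Q) := by
  obtain ⟨k, Ss, hSs, rfl⟩ := hQ
  refine ⟨k + 1, fun i => Nat.casesOn i T Ss, ?_, biUnion_range_succ_casesOn T Ss k⟩
  rintro (_ | i) hi
  · simpa using hT
  · simpa only [biUnion_range_succ_casesOn, Set.sdiff_sdiff] using hSs i (by omega)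

theorem ncard_edges_eq_finsum_degIn [Finite V] {W T : Set V}
    (hT : ∀ u ∈ T, ∀ v ∈ T, ¬ G.Adj u v) :
    {p : V × V | G.Adj p.1 p.2 ∧ p.1 ∈ T ∧ p.2 ∈ W \ T}.ncard = ∑ᶠ v ∈ T, degIn G W v := by
  have hedges : {p : V × V | G.Adj p.1 p.2 ∧ p.1 ∈ T ∧ p.2 ∈ W \ T}
      = ⋃ v ∈ T, Prod.mk v '' (G.neighborSet v ∩ W) := by
    ext ⟨u, w⟩
    simp only [Set.mem_ofPred_eq, Set.mem_sdiff, Set.mem_iUnion, Set.mem_image, Set.mem_inter_iff,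
      SimpleGraph.mem_neighborSet, Prod.mk.injEq, exists_prop]
    constructor
    · rintro ⟨hadj, hu, hw, -⟩
      exact ⟨u, hu, w, ⟨hadj, hw⟩, rfl, rfl⟩
    · rintro ⟨u, hu, w, ⟨hadj, hw⟩, rfl, rfl⟩
      exact ⟨hadj, hu, hw, fun hwT => hT u hu w hwT hadj⟩
  rw [hedges, T.toFinite.ncard_biUnion (fun _ _ => Set.toFinite _)]
  · exact finsum_mem_congr rfl fun v _ =>
      Set.ncard_image_of_injective _ (Prod.mk_right_injective v)
  · intro u _ v _ huv
    rw [Function.onFun, Set.disjoint_left]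
    rintro _ ⟨_, -, rfl⟩ ⟨_, -, h⟩
    exact huv (congrArg Prod.fst h).symm

theorem simpleAdmissibleIn_iff [Finite V] {W T : Set V} :
    SimpleAdmissibleIn G W T ↔
      T ⊆ W ∧ (∀ u ∈ T, ∀ v ∈ T, ¬ G.Adj u v) ∧ Even (∑ᶠ v ∈ T, degIn G W v) := by
  unfold SimpleAdmissibleIn
  refine and_congr_right fun _ => and_congr_right fun hT => ?_
  rw [ncard_edges_eq_finsum_degIn G hT]

theorem exists_simpleAdmissibleIn_of_not_oddClique [Finite V] {W S : Set V} (hSW : S ⊆ W)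
    (h : ¬ (G.IsClique S ∧ ∀ v ∈ S, Odd (degIn G W v))) :
    ∃ T ⊆ S, T.Nonempty ∧ SimpleAdmissibleIn G W T := by
  by_cases hodd : ∀ v ∈ S, Odd (degIn G W v)
  · obtain ⟨u, hu, v, hv, huv, hnadj⟩ : ∃ u ∈ S, ∃ v ∈ S, u ≠ v ∧ ¬ G.Adj u v := by
      have hnclique : ¬ G.IsClique S := fun hclique => h ⟨hclique, hodd⟩
      simpa [SimpleGraph.isClique_iff, Set.Pairwise] using hnclique
    refine ⟨{u, v}, Set.insert_subset hu (Set.singleton_subset_iff.mpr hv),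
      Set.insert_nonempty u {v}, (simpleAdmissibleIn_iff G).mpr ⟨?_, ?_, ?_⟩⟩
    · exact Set.insert_subset (hSW hu) (Set.singleton_subset_iff.mpr (hSW hv))
    · rintro a (rfl | rfl) b (rfl | rfl)
      exacts [G.irrefl, hnadj, fun h => hnadj h.symm, G.irrefl]
    · rw [finsum_mem_pair huv]
      exact (hodd u hu).add_odd (hodd v hv)
  · obtain ⟨v, hv, heven⟩ : ∃ v ∈ S, Even (degIn G W v) := by simpa using hodd
    refine ⟨{v}, Set.singleton_subset_iff.mpr hv, Set.singleton_nonempty v,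
      (simpleAdmissibleIn_iff G).mpr ⟨Set.singleton_subset_iff.mpr (hSW hv), ?_, ?_⟩⟩
    · rintro a rfl b rfl
      exact G.irrefl
    · rwa [finsum_mem_singleton]

def IsOddCliqueReduction (W S Q : Set V) : Prop :=
  Q ⊆ S ∧ AdmissibleIn G W Q ∧ G.IsClique (S \ Q) ∧ ∀ v ∈ S \ Q, Odd (degIn G (W \ Q) v)

theorem IsOddCliqueReduction.union_of_simpleAdmissibleIn {W S T Q : Set V} (hTS : T ⊆ S)
    (hT : SimpleAdmissibleIn G W T) (hQ : IsOddCliqueReduction G (W \ T) (S \ T) Q) :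
    IsOddCliqueReduction G W S (T ∪ Q) := by
  obtain ⟨hQS, hadm, hclique, hodd⟩ := hQ
  simp only [Set.sdiff_sdiff] at hclique hodd
  exact ⟨Set.union_subset hTS (hQS.trans Set.sdiff_subset),
    hadm.union_of_simpleAdmissibleIn G hT, hclique, hodd⟩

theorem exists_isOddCliqueReduction [Finite V] {W S : Set V} (hSW : S ⊆ W) :
    ∃ Q, IsOddCliqueReduction G W S Q := by
  induction hn : S.ncard using Nat.strong_induction_on generalizing W S with
  | _ n ih =>
    by_cases hS : G.IsClique S ∧ ∀ v ∈ S, Odd (degIn G W v)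
    · exact ⟨∅, Set.empty_subset S, AdmissibleIn.empty G W, by simpa using hS.1,
        by simpa using hS.2⟩
    obtain ⟨T, hTS, hTne, hT⟩ := exists_simpleAdmissibleIn_of_not_oddClique G hSW hS
    have hlt : (S \ T).ncard < n :=
      hn ▸ Set.ncard_lt_ncard (hTS.sdiff_ssubset_of_nonempty hTne)
    obtain ⟨Q, hQ⟩ := ih _ hlt (Set.sdiff_subset_sdiff_left hSW) rfl
    exact ⟨T ∪ Q, hQ.union_of_simpleAdmissibleIn G hTS hT⟩

end

/-- Greedy admissible removal: for any set `S` of vertices of a finite graph `G`, we may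
admissibly remove a set `Q ⊆ S` of vertices such that the remaining vertices of `S` form a
clique in the remaining graph and all have odd degree in the remaining graph. -/
theorem greedy_admissible_removal {V : Type*} [Fintype V] (G : SimpleGraph V) (S : Set V) :
    ∃ Q ⊆ S, Admissible G Q ∧ G.IsClique (S \ Q) ∧
      ∀ v ∈ S \ Q, Odd (degIn G (Set.univ \ Q) v) := by
  exact exists_isOddCliqueReduction G (Set.subset_univ S)
end

section
/- Every finite graph that has an even number of edges and contains no K_4 (complete graph on four vertices) as a subgraph is even-decomposable. -/
namespace SimpleGraph

variable {V : Type*} (G : SimpleGraph V)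

noncomputable def degIn (S : Set V) (v : V) : ℕ :=
  (G.neighborSet v ∩ S).ncard

def EvenDecomposableOn (S : Set V) : Prop :=
  ∃ (k : ℕ) (Vs : ℕ → Set V),
    Vs 0 = S ∧ Vs k = ∅ ∧
    (∀ i < k, Vs (i + 1) ⊂ Vs i) ∧
    (∀ i < k, Even (edgesIn G (Vs i))) ∧
    (∀ i < k, ∀ u ∈ Vs i \ Vs (i + 1), ∀ v ∈ Vs i \ Vs (i + 1), ¬ G.Adj u v)

theorem evenDecomposableOn_empty : G.EvenDecomposableOn ∅ :=
  ⟨0, fun _ => ∅, rfl, rfl, by simp, by simp, by simp⟩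

theorem EvenDecomposableOn.of_sdiff {S T : Set V} (hTS : T ⊆ S) (hT : T.Nonempty)
    (hTind : G.IsIndepSet T) (hS : Even (edgesIn G S)) (h : G.EvenDecomposableOn (S \ T)) :
    G.EvenDecomposableOn S := by
  obtain ⟨k, Vs, h0, hk, hssub, heven, hind⟩ := h
  refine ⟨k + 1, fun i => Nat.casesOn i S Vs, rfl, hk, ?_, ?_, ?_⟩ <;> rintro (_ | i) hi
  · simpa [h0] using hTS.sdiff_ssubset_of_nonempty hT
  · exact hssub i (by omega)
  · exact hS
  · exact heven i (by omega)
  · intro u hu v hv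
    simp only [Nat.rec_zero, h0, Set.sdiff_sdiff_cancel_left hTS] at hu hv
    rcases eq_or_ne u v with rfl | huv
    exacts [G.irrefl, hTind hu hv huv]
  · exact hind i (by omega)

theorem edgesIn_eq_zero_of_subsingleton {S : Set V} (hS : S.Subsingleton) : edgesIn G S = 0 := by
  suffices h : {e ∈ G.edgeSet | ∀ v ∈ e, v ∈ S} = ∅ by rw [edgesIn, h, Set.ncard_empty]
  refine Set.eq_empty_of_forall_notMem ?_
  rintro ⟨a, b⟩ ⟨hab, hS'⟩
  exact G.ne_of_adj hab (hS (hS' a (Sym2.mem_mk_left a b)) (hS' b (Sym2.mem_mk_right a b)))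

theorem degIn_sdiff_singleton_of_not_adj {S : Set V} {u v : V} (h : ¬ G.Adj v u) :
    G.degIn (S \ {u}) v = G.degIn S v := by
  unfold degIn
  congr 1
  ext w
  simp only [Set.mem_inter_iff, mem_neighborSet, Set.mem_sdiff, Set.mem_singleton_iff]
  grind

section

variable {G}

theorem IsClique.degIn_eq {S : Set V} {v : V} (hS : G.IsClique S) (hv : v ∈ S) :
    G.degIn S v = (S \ {v}).ncard := by
  unfold degIn
  congr 1
  ext w
  simp only [Set.mem_inter_iff, mem_neighborSet, Set.mem_sdiff, Set.mem_singleton_iff]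
  exact ⟨fun ⟨hvw, hw⟩ => ⟨hw, hvw.ne'⟩,
    fun ⟨hw, hwv⟩ => ⟨hS hv hw (Ne.symm hwv), hw⟩⟩

theorem IsClique.ncard_lt_of_cliqueFree [Finite V] {S : Set V} {n : ℕ} (hS : G.IsClique S)
    (hG : G.CliqueFree n) : S.ncard < n := by
  by_contra! h
  obtain ⟨t, hts, ht⟩ := Set.exists_subset_card_eq h
  refine hG (Set.toFinite t).toFinset ⟨by simpa using hS.subset hts, ?_⟩
  rw [← ht, Set.ncard_eq_toFinset_card t]

end

variable [Finite V]

theorem edgesIn_eq_edgesIn_sdiff_singleton_add_degIn {S : Set V} {v : V} (hv : v ∈ S) :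
    edgesIn G S = edgesIn G (S \ {v}) + G.degIn S v := by
  have hsplit : {e ∈ G.edgeSet | ∀ w ∈ e, w ∈ S} =
      {e ∈ G.edgeSet | ∀ w ∈ e, w ∈ S \ {v}} ∪
        (fun w => s(v, w)) '' (G.neighborSet v ∩ S) := by
    ext e
    induction e using Sym2.ind with
    | _ a b =>
      simp only [Set.mem_ofPred_eq, mem_edgeSet, Sym2.mem_iff, forall_eq_or_imp,
        forall_eq, Set.mem_union, Set.mem_image, Set.mem_inter_iff, mem_neighborSet,
        Set.mem_sdiff, Set.mem_singleton_iff, Sym2.eq_iff]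
      grind [Adj.symm, SimpleGraph.irrefl]
  have hdisj : Disjoint {e ∈ G.edgeSet | ∀ w ∈ e, w ∈ S \ {v}}
      ((fun w => s(v, w)) '' (G.neighborSet v ∩ S)) := by
    rw [Set.disjoint_right]
    rintro _ ⟨w, -, rfl⟩ ⟨-, h⟩
    exact (h v (Sym2.mem_mk_left v w)).2 rfl
  rw [edgesIn, hsplit, Set.ncard_union_eq hdisj,
    Set.ncard_image_of_injective _ fun _ _ => Sym2.congr_right.mp]
  rfl

theorem edgesIn_eq_edgesIn_sdiff_pair_add {S : Set V} {u v : V} (hu : u ∈ S) (hv : v ∈ S)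
    (huv : u ≠ v) (h : ¬ G.Adj v u) :
    edgesIn G S = edgesIn G (S \ {u, v}) + G.degIn S u + G.degIn S v := by
  rw [G.edgesIn_eq_edgesIn_sdiff_singleton_add_degIn hu,
    G.edgesIn_eq_edgesIn_sdiff_singleton_add_degIn (show v ∈ S \ {u} from ⟨hv, huv.symm⟩),
    G.degIn_sdiff_singleton_of_not_adj h, Set.sdiff_sdiff, Set.singleton_union]
  ring

theorem odd_edgesIn_of_isClique (hK4 : G.CliqueFree 4) {S : Set V} {v : V} (hS : G.IsClique S)
    (hv : v ∈ S) (hodd : Odd (G.degIn S v)) : Odd (edgesIn G S) := by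
  have hcard : (S \ {v}).ncard + 1 = S.ncard := Set.ncard_sdiff_singleton_add_one hv
  have hlt := hS.ncard_lt_of_cliqueFree hK4
  rw [hS.degIn_eq hv] at hodd
  have hone : (S \ {v}).ncard = 1 := by
    obtain ⟨m, hm⟩ := hodd
    omega
  rw [G.edgesIn_eq_edgesIn_sdiff_singleton_add_degIn hv, hS.degIn_eq hv, hone,
    G.edgesIn_eq_zero_of_subsingleton (Set.ncard_le_one_iff_subsingleton.mp hone.le)]
  exact odd_one

theorem exists_isIndepSet_even_edgesIn_sdiff (hK4 : G.CliqueFree 4) {S : Set V}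
    (hS : S.Nonempty) (heven : Even (edgesIn G S)) :
    ∃ T ⊆ S, T.Nonempty ∧ G.IsIndepSet T ∧ Even (edgesIn G (S \ T)) := by
  by_cases hdeg : ∃ v ∈ S, Even (G.degIn S v)
  · obtain ⟨v, hv, hdeg⟩ := hdeg
    refine ⟨{v}, by simpa, Set.singleton_nonempty v, Set.pairwise_singleton _ _, ?_⟩
    rw [G.edgesIn_eq_edgesIn_sdiff_singleton_add_degIn hv, Nat.even_add] at heven
    exact heven.mpr hdeg
  simp only [not_exists, not_and, Nat.not_even_iff_odd] at hdeg
  by_cases hclique : G.IsClique S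
  · obtain ⟨v, hv⟩ := hS
    have hodd := G.odd_edgesIn_of_isClique hK4 hclique hv (hdeg v hv)
    exact absurd heven (Nat.not_even_iff_odd.mpr hodd)
  obtain ⟨u, hu, v, hv, huv, hadj⟩ : ∃ u ∈ S, ∃ v ∈ S, u ≠ v ∧ ¬ G.Adj u v := by
    simpa [IsClique, Set.Pairwise] using hclique
  refine ⟨{u, v}, Set.insert_subset hu (by simpa), Set.insert_nonempty u {v}, ?_, ?_⟩
  · exact Set.pairwise_pair.mpr fun _ => ⟨hadj, fun h => hadj h.symm⟩
  · have hsum : Even (G.degIn S u + G.degIn S v) := (hdeg u hu).add_odd (hdeg v hv)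
    rw [G.edgesIn_eq_edgesIn_sdiff_pair_add hu hv huv (mt Adj.symm hadj), add_assoc,
      Nat.even_add] at heven
    exact heven.mpr hsum

theorem evenDecomposableOn_of_even_edgesIn (hK4 : G.CliqueFree 4) (S : Set V)
    (heven : Even (edgesIn G S)) : G.EvenDecomposableOn S := by
  induction S using WellFoundedLT.induction with
  | _ S ih =>
    rcases S.eq_empty_or_nonempty with rfl | hS
    · exact G.evenDecomposableOn_empty
    obtain ⟨T, hTS, hT, hTind, hdiff⟩ := G.exists_isIndepSet_even_edgesIn_sdiff hK4 hS heven
    exact (ih _ (hTS.sdiff_ssubset_of_nonempty hT) hdiff).of_sdiff G hTS hT hTind heven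

end SimpleGraph

/-- Every finite graph with an even number of edges and no `K₄` is even-decomposable. -/
theorem k4_free_even_decomposable {V : Type*} [Fintype V] (G : SimpleGraph V)
    (heven : Even G.edgeSet.ncard) (hK4 : G.CliqueFree 4) :
    EvenDecomposable G :=
  G.evenDecomposableOn_of_even_edgesIn hK4 Set.univ (by simpa [edgesIn] using heven)
end
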